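/- arXiv:1904.03858 — 7 statements merged into one kernel-verified Lean document; each statement's English description precedes it below -/
import Mathlib

section
/- For every set S ⊆ [n] with 0 < |S| ≤ r, the overcounting numbers c_T := Σ_{U ⊇ T, |U| ≤ r} (−1)^{|U \ T|} satisfy Σ_{T ⊇ S, |T| ≤ r} c_T = 1. -/
open Finset

lemma ic_aux_sum {n : ℕ} (S U : Finset (Fin n)) (hSU : S ⊆ U) :
    ∑ T ∈ Finset.univ.filter (fun T : Finset (Fin n) => S ⊆ T ∧ T ⊆ U),
      (-1 : ℤ) ^ (U \ T).card = if U = S then 1 else 0 := by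
  have key : ∑ T ∈ Finset.univ.filter (fun T : Finset (Fin n) => S ⊆ T ∧ T ⊆ U),
      (-1 : ℤ) ^ (U \ T).card
      = ∑ A ∈ (U \ S).powerset, (-1 : ℤ) ^ ((U \ S) \ A).card := by
    apply Finset.sum_nbij' (fun T => T \ S) (fun A => S ∪ A)
    · intro T hT
      simp only [mem_filter, mem_univ, true_and] at hT
      simp only [mem_powerset]
      exact sdiff_subset_sdiff hT.2 (Subset.refl S)
    · intro A hA
      simp only [mem_powerset] at hA
      simp only [mem_filter, mem_univ, true_and]
      exact ⟨subset_union_left, union_subset hSU (hA.trans (sdiff_subset))⟩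
    · intro T hT
      simp only [mem_filter, mem_univ, true_and] at hT
      exact Finset.union_sdiff_of_subset hT.1
    · intro A hA
      simp only [mem_powerset] at hA
      rw [union_sdiff_cancel_left]
      exact disjoint_of_subset_right hA disjoint_sdiff
    · intro T hT
      simp only [mem_filter, mem_univ, true_and] at hT
      congr 1
      congr 1
      ext x
      simp only [Finset.mem_sdiff]
      constructor
      · exact fun ⟨h1, h2⟩ => ⟨⟨h1, fun hs => h2 (hT.1 hs)⟩, fun ⟨ht, _⟩ => h2 ht⟩
      · rintro ⟨⟨h1, h2⟩, h3⟩
        exact ⟨h1, fun ht => h3 ⟨ht, h2⟩⟩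
  rw [key]
  have hcard : ∀ A ∈ (U \ S).powerset,
      (-1 : ℤ) ^ ((U \ S) \ A).card = (-1 : ℤ) ^ (U \ S).card * (-1 : ℤ) ^ A.card := by
    intro A hA
    simp only [mem_powerset] at hA
    have h1 : ((U \ S) \ A).card = (U \ S).card - A.card := card_sdiff_of_subset hA
    have h2 : A.card ≤ (U \ S).card := card_le_card hA
    rw [h1]
    have : (-1 : ℤ) ^ ((U \ S).card - A.card) * (-1 : ℤ) ^ A.card = (-1 : ℤ) ^ (U \ S).card := by
      rw [← pow_add, Nat.sub_add_cancel h2]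
    calc (-1 : ℤ) ^ ((U \ S).card - A.card)
        = (-1 : ℤ) ^ ((U \ S).card - A.card) * ((-1 : ℤ) ^ A.card * (-1 : ℤ) ^ A.card) := by
          rw [← pow_add, Even.neg_one_pow ⟨A.card, rfl⟩, mul_one]
      _ = (-1 : ℤ) ^ (U \ S).card * (-1 : ℤ) ^ A.card := by rw [← mul_assoc, this]
  rw [Finset.sum_congr rfl hcard, ← Finset.mul_sum, Finset.sum_powerset_neg_one_pow_card]
  by_cases h : U = S
  · simp [h]
  · have : U \ S ≠ ∅ := by
      intro he
      exact h (Subset.antisymm (sdiff_eq_empty_iff_subset.mp he) hSU)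
    simp [h, this]

/-- For every nonempty `S ⊆ [n]` with `|S| ≤ r`, the overcounting numbers
`c_T = Σ_{U ⊇ T, |U| ≤ r} (-1)^{|U \ T|}` satisfy `Σ_{T ⊇ S, |T| ≤ r} c_T = 1`. -/
theorem stmt1 (n r : ℕ) (hr : 1 ≤ r) (hrn : r ≤ n)
    (S : Finset (Fin n)) (hS : S.Nonempty) (hSr : S.card ≤ r) :
    (∑ T ∈ Finset.univ.filter (fun T : Finset (Fin n) => S ⊆ T ∧ T.card ≤ r),
      ∑ U ∈ Finset.univ.filter (fun U : Finset (Fin n) => T ⊆ U ∧ U.card ≤ r),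
        (-1 : ℤ) ^ (U \ T).card) = 1 := by
  rw [Finset.sum_comm' (s' := fun U => Finset.univ.filter
        (fun T : Finset (Fin n) => S ⊆ T ∧ T ⊆ U))
      (t' := Finset.univ.filter (fun U : Finset (Fin n) => S ⊆ U ∧ U.card ≤ r))]
  · rw [Finset.sum_congr rfl (fun U hU => by
      simp only [mem_filter, mem_univ, true_and] at hU
      exact ic_aux_sum S U hU.1)]
    rw [Finset.sum_ite_eq' _ S (fun _ => (1 : ℤ))]
    simp [hSr]
  · intro T U
    simp only [mem_filter, mem_univ, true_and]
    constructor
    · rintro ⟨⟨h1, h2⟩, h3, h4⟩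
      exact ⟨⟨h1, h3⟩, h1.trans h3, h4⟩
    · rintro ⟨⟨h1, h3⟩, h2, h4⟩
      exact ⟨⟨h1, (card_le_card h3).trans h4⟩, h3, h4⟩
end

section
/- The vectors u^φ, where φ = (a₁,b₁,…,a_m,b_m) ranges over sequences of 2m distinct elements of [n] and u^φ_S = Π_{i=1}^m (1{a_i ∈ S} − 1{b_i ∈ S}) for |S| = ℓ, are eigenvectors of the matrix X with entries X_{S,T} = 1{|S △ T| = p}, and all u^φ with the same m share a common eigenvalue μ_m. -/
open Finset

lemma card_symmDiff' {α : Type*} [DecidableEq α] (s t : Finset α) :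
    (symmDiff s t).card = (s \ t).card + (t \ s).card := by
  rw [symmDiff_def, sup_eq_union]
  exact card_union_of_disjoint disjoint_sdiff_sdiff

lemma partition_card {n : ℕ} (S C T : Finset (Fin n)) (hsub : C ⊆ T) :
    T.card = C.card + ((T ∩ (S \ C)).card + (T \ (S ∪ C)).card) := by
  have hT : T = C ∪ ((T ∩ (S \ C)) ∪ (T \ (S ∪ C))) := by
    ext x
    have hx : x ∈ C → x ∈ T := fun h => hsub h
    simp only [mem_union, mem_inter, mem_sdiff]
    tauto
  have d1 : Disjoint C ((T ∩ (S \ C)) ∪ (T \ (S ∪ C))) := by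
    rw [disjoint_union_right]
    constructor <;> (rw [disjoint_left]; intro x hx; simp only [mem_inter, mem_sdiff, mem_union]; tauto)
  have d2 : Disjoint (T ∩ (S \ C)) (T \ (S ∪ C)) := by
    rw [disjoint_left]; intro x hx; simp only [mem_inter, mem_sdiff, mem_union] at *; tauto
  conv_lhs => rw [hT]
  rw [card_union_of_disjoint d1, card_union_of_disjoint d2]

lemma inter_card' {n : ℕ} (S C T : Finset (Fin n)) (hsub : C ⊆ T) :
    (S ∩ T).card = (S ∩ C).card + (T ∩ (S \ C)).card := by
  have hST : S ∩ T = (S ∩ C) ∪ (T ∩ (S \ C)) := by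
    ext x
    have hx : x ∈ C → x ∈ T := fun h => hsub h
    simp only [mem_union, mem_inter, mem_sdiff]
    tauto
  rw [hST, card_union_of_disjoint]
  rw [disjoint_left]; intro x hx; simp only [mem_inter, mem_sdiff] at *; tauto

def gfun (n ℓ p m r : ℕ) : ℕ :=
  if m ≤ p / 2 + r ∧ r + p / 2 ≤ ℓ then
    (ℓ - r).choose (ℓ - r - p / 2) * (n - (ℓ + m - r)).choose (r + p / 2 - m)
  else 0

lemma count_lemma {n : ℕ} (ℓ p m : ℕ) (hp : Even p) (S C : Finset (Fin n))
    (hS : S.card = ℓ) (hC : C.card = m) :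
    (univ.filter (fun T : Finset (Fin n) =>
        T.card = ℓ ∧ C ⊆ T ∧ (symmDiff S T).card = p)).card
      = gfun n ℓ p m (S ∩ C).card := by
  classical
  obtain ⟨q, hq⟩ := hp
  set r := (S ∩ C).card with hr
  have hrm : r ≤ m := hC ▸ card_le_card inter_subset_right
  have hrl : r ≤ ℓ := hS ▸ card_le_card inter_subset_left
  -- basic card facts for any T in the filter
  have key : ∀ T : Finset (Fin n), T.card = ℓ → C ⊆ T → (symmDiff S T).card = p →
      (T ∩ (S \ C)).card = ℓ - r - p / 2 ∧ (T \ (S ∪ C)).card = r + p / 2 - m ∧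
      m ≤ p / 2 + r ∧ r + p / 2 ≤ ℓ := by
    intro T hT hsub hsd
    have f1 := partition_card S C T hsub
    have f2 := inter_card' S C T hsub
    have f3 : (S \ T).card + (S ∩ T).card = S.card := card_sdiff_add_card_inter S T
    have f4 : (T \ S).card + (T ∩ S).card = T.card := card_sdiff_add_card_inter T S
    have f5 : (T ∩ S).card = (S ∩ T).card := by rw [inter_comm]
    rw [card_symmDiff' S T] at hsd
    omega
  by_cases hg : m ≤ p / 2 + r ∧ r + p / 2 ≤ ℓ
  · -- bijection with pairs
    rw [gfun, if_pos hg]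
    have hSC : (S \ C).card = ℓ - r := by
      have := card_sdiff_add_card_inter S C; omega
    have hcomp : ((S ∪ C)ᶜ).card = n - (ℓ + m - r) := by
      have h1 : (S ∪ C).card + (S ∩ C).card = S.card + C.card := card_union_add_card_inter S C
      have h2 : ((S ∪ C)ᶜ).card = Fintype.card (Fin n) - (S ∪ C).card := card_compl _
      have h3 : (S ∪ C).card ≤ n := by
        have := card_le_card (subset_univ (S ∪ C)); simpa using this
      simp only [Fintype.card_fin] at h2
      omega
    have main : (univ.filter (fun T : Finset (Fin n) =>
        T.card = ℓ ∧ C ⊆ T ∧ (symmDiff S T).card = p)).card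
        = (((S \ C).powersetCard (ℓ - r - p/2)) ×ˢ (((S ∪ C)ᶜ).powersetCard (r + p/2 - m))).card := by
      apply card_nbij' (i := fun T => (T ∩ (S \ C), T \ (S ∪ C)))
        (j := fun AB => C ∪ AB.1 ∪ AB.2)
      · intro T hT
        simp only [mem_coe, mem_filter, mem_univ, true_and] at hT
        obtain ⟨hT, hsub, hsd⟩ := hT
        obtain ⟨e1, e2, -⟩ := key T hT hsub hsd
        simp only [mem_coe, mem_product, mem_powersetCard]
        refine ⟨⟨inter_subset_right, e1⟩, ⟨?_, e2⟩⟩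
        intro x hxx
        simp only [mem_sdiff] at hxx
        simpa using hxx.2
      · intro AB hAB
        simp only [mem_coe, mem_product, mem_powersetCard] at hAB
        obtain ⟨⟨hA, hAc⟩, hB, hBc⟩ := hAB
        obtain ⟨A, B⟩ := AB
        simp only at hA hAc hB hBc ⊢
        have hxA : ∀ x ∈ A, x ∈ S ∧ x ∉ C := by
          intro x hx; have := hA hx; simp only [mem_sdiff] at this; exact this
        have hxB : ∀ x ∈ B, x ∉ S ∧ x ∉ C := by
          intro x hx; have := hB hx
          simp only [mem_compl, mem_union] at this; tauto
        have hsub : C ⊆ C ∪ A ∪ B := by intro x hx; simp [hx]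
        have d1 : Disjoint C A := by
          rw [disjoint_right]; intro x hx; exact (hxA x hx).2
        have d2 : Disjoint (C ∪ A) B := by
          rw [disjoint_right]; intro x hx
          simp only [mem_union]; push_neg
          exact ⟨(hxB x hx).2, fun h => (hxB x hx).1 ((hxA x h).1)⟩
        have hcard : (C ∪ A ∪ B).card = ℓ := by
          rw [card_union_of_disjoint d2, card_union_of_disjoint d1]
          omega
        have hint : (S ∩ (C ∪ A ∪ B)).card = r + (ℓ - r - p/2) := by
          have : S ∩ (C ∪ A ∪ B) = (S ∩ C) ∪ A := by
            ext x
            simp only [mem_inter, mem_union]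
            have h1 := fun h => (hxA x h)
            have h2 := fun h => (hxB x h)
            tauto
          rw [this, card_union_of_disjoint, hAc]
          rw [disjoint_right]; intro x hx
          simp only [mem_inter]; push_neg; intro _; exact (hxA x hx).2
        refine mem_filter.2 ⟨mem_univ _, hcard, hsub, ?_⟩
        rw [card_symmDiff']
        have f3 : (S \ (C∪A∪B)).card + (S ∩ (C∪A∪B)).card = S.card :=
          card_sdiff_add_card_inter _ _
        have f4 : ((C∪A∪B) \ S).card + ((C∪A∪B) ∩ S).card = (C∪A∪B).card :=
          card_sdiff_add_card_inter _ _
        have f5 : ((C∪A∪B) ∩ S).card = (S ∩ (C∪A∪B)).card := by rw [inter_comm]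
        omega
      · intro T hT
        simp only [mem_coe, mem_filter, mem_univ, true_and] at hT
        obtain ⟨hT, hsub, hsd⟩ := hT
        have hx : ∀ x, x ∈ C → x ∈ T := fun x h => hsub h
        ext x
        simp only [mem_union, mem_inter, mem_sdiff]
        have h1 := hx x
        tauto
      · intro AB hAB
        simp only [mem_coe, mem_product, mem_powersetCard] at hAB
        obtain ⟨⟨hA, hAc⟩, hB, hBc⟩ := hAB
        obtain ⟨A, B⟩ := AB
        simp only at hA hAc hB hBc ⊢
        have hxA : ∀ x, x ∈ A → x ∈ S ∧ x ∉ C := by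
          intro x hx; have := hA hx; simp only [mem_sdiff] at this; exact this
        have hxB : ∀ x, x ∈ B → x ∉ S ∧ x ∉ C := by
          intro x hx; have := hB hx
          simp only [mem_compl, mem_union] at this; tauto
        refine Prod.ext ?_ ?_ <;> simp only
        · ext x
          simp only [mem_inter, mem_union, mem_sdiff]
          have h1 := fun h => (hxA x h)
          have h2 := fun h => (hxB x h)
          tauto
        · ext x
          simp only [mem_sdiff, mem_union]
          have h1 := fun h => (hxA x h)
          have h2 := fun h => (hxB x h)
          tauto
    rw [main, card_product, card_powersetCard, card_powersetCard, hSC, hcomp]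
  · rw [gfun, if_neg hg]
    rw [card_eq_zero, filter_eq_empty_iff]
    intro T _
    push_neg
    intro hT hsub hsd
    exact absurd (key T hT hsub hsd).2.2 hg

lemma neg_one_pow_congr' {x y : ℕ} (h : x % 2 = y % 2) : ((-1:ℝ))^x = (-1)^y := by
  rcases Nat.even_or_odd x with hx | hx
  · have hx' := Nat.even_iff.1 hx
    rw [hx.neg_one_pow, (Nat.even_iff.2 (by omega : y % 2 = 0)).neg_one_pow]
  · have hx' := Nat.odd_iff.1 hx
    rw [hx.neg_one_pow, (Nat.odd_iff.2 (by omega : y % 2 = 1)).neg_one_pow]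

lemma neg_one_pow_add_eq_zero {x y : ℕ} (h : (x + y) % 2 = 1) : ((-1:ℝ))^x + (-1)^y = 0 := by
  rcases Nat.even_or_odd x with hx | hx
  · have hx' := Nat.even_iff.1 hx
    rw [hx.neg_one_pow, (Nat.odd_iff.2 (by omega : y % 2 = 1)).neg_one_pow]; ring
  · have hx' := Nat.odd_iff.1 hx
    rw [hx.neg_one_pow, (Nat.even_iff.2 (by omega : y % 2 = 0)).neg_one_pow]; ring

lemma card_symmDiff_add {α : Type*} [DecidableEq α] (s t : Finset α) :
    (symmDiff s t).card + 2 * (s ∩ t).card = s.card + t.card := by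
  rw [symmDiff_def, sup_eq_union, card_union_of_disjoint disjoint_sdiff_sdiff]
  have h1 := card_sdiff_add_card_inter s t
  have h2 := card_sdiff_add_card_inter t s
  have h3 : (t ∩ s).card = (s ∩ t).card := by rw [inter_comm]
  omega

lemma expand_prod {n m : ℕ} (a b : Fin m → Fin n) (T : Finset (Fin n)) :
    ∏ i, ((if a i ∈ T then (1:ℝ) else 0) - (if b i ∈ T then 1 else 0))
      = ∑ E ∈ (univ : Finset (Fin m)).powerset,
          (-1:ℝ)^(m - E.card) * (if ∀ i, (if i ∈ E then a i else b i) ∈ T then 1 else 0) := by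
  classical
  have : ∀ i : Fin m, ((if a i ∈ T then (1:ℝ) else 0) - (if b i ∈ T then 1 else 0))
      = ((if a i ∈ T then (1:ℝ) else 0) + (-(if b i ∈ T then 1 else 0))) := by
    intro i; ring
  rw [Finset.prod_congr rfl (fun i _ => this i), Finset.prod_add]
  apply Finset.sum_congr rfl
  intro E hE
  have hEu : E ⊆ univ := mem_powerset.1 hE
  have hcard : (univ \ E).card = m - E.card := by
    rw [card_sdiff_of_subset hEu, card_univ, Fintype.card_fin]
  have hneg : ∏ i ∈ univ \ E, (-(if b i ∈ T then (1:ℝ) else 0))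
      = (-1:ℝ)^(m - E.card) * ∏ i ∈ univ \ E, (if b i ∈ T then (1:ℝ) else 0) := by
    rw [← hcard]
    have h2 : ∀ i ∈ univ \ E, (-(if b i ∈ T then (1:ℝ) else 0)) = (-1) * (if b i ∈ T then (1:ℝ) else 0) := fun i _ => by ring
    rw [Finset.prod_congr rfl h2, Finset.prod_mul_distrib, Finset.prod_const]
  rw [hneg, Finset.prod_boole, Finset.prod_boole]
  rw [mul_left_comm, ite_zero_mul_ite_zero]
  congr 1
  have : ((∀ i ∈ E, a i ∈ T) ∧ ∀ i ∈ univ \ E, b i ∈ T) ↔ (∀ i, (if i ∈ E then a i else b i) ∈ T) := by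
    constructor
    · intro ⟨h1, h2⟩ i
      by_cases hi : i ∈ E
      · simpa [hi] using h1 i hi
      · simpa [hi] using h2 i (by simp [hi])
    · intro h
      constructor
      · intro i hi; have := h i; simpa [hi] using this
      · intro i hi; simp only [mem_sdiff, mem_univ, true_and] at hi
        have := h i; simpa [hi] using this
  simp only [this, one_mul]


lemma lhs_eq {n ℓ p m : ℕ} (hp : Even p) (a b : Fin m → Fin n)
    (hcinj : ∀ E : Finset (Fin m), Function.Injective (fun i => if i ∈ E then a i else b i))
    (S : {S : Finset (Fin n) // S.card = ℓ}) :
    ∑ T : {S : Finset (Fin n) // S.card = ℓ},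
        (if (symmDiff S.1 T.1).card = p then (1:ℝ) else 0) *
          ∏ i, ((if a i ∈ T.1 then (1:ℝ) else 0) - (if b i ∈ T.1 then 1 else 0))
      = ∑ E ∈ (univ : Finset (Fin m)).powerset,
          (-1:ℝ)^(m - E.card) *
            (gfun n ℓ p m ((univ.filter
              (fun i => (if i ∈ E then a i else b i) ∈ S.1)).card) : ℝ) := by
  classical
  have step1 : ∑ T : {S : Finset (Fin n) // S.card = ℓ},
      (if (symmDiff S.1 T.1).card = p then (1:ℝ) else 0) *
        ∏ i, ((if a i ∈ T.1 then (1:ℝ) else 0) - (if b i ∈ T.1 then 1 else 0))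
      = ∑ E ∈ (univ : Finset (Fin m)).powerset, ∑ T : {S : Finset (Fin n) // S.card = ℓ},
          (-1:ℝ)^(m - E.card) *
            (if T.1.card = ℓ ∧ (univ.image (fun i => if i ∈ E then a i else b i)) ⊆ T.1 ∧
                (symmDiff S.1 T.1).card = p then 1 else 0) := by
    rw [Finset.sum_comm]
    apply Finset.sum_congr rfl
    intro T _
    rw [expand_prod, mul_sum]
    apply Finset.sum_congr rfl
    intro E _
    rw [mul_left_comm, ite_zero_mul_ite_zero, one_mul]
    congr 1
    apply if_congr _ rfl rfl
    constructor
    · intro ⟨h1, h2⟩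
      refine ⟨T.2, ?_, h1⟩
      rw [image_subset_iff]
      intro i _
      exact h2 i
    · intro ⟨h1, h2, h3⟩
      refine ⟨h3, fun i => ?_⟩
      rw [image_subset_iff] at h2
      exact h2 i (mem_univ i)
  rw [step1]
  apply Finset.sum_congr rfl
  intro E _
  rw [← mul_sum]
  congr 1
  have hCcard : (univ.image (fun i => if i ∈ E then a i else b i)).card = m := by
    rw [card_image_of_injective _ (hcinj E), card_univ, Fintype.card_fin]
  have hsub : ∑ T : {S : Finset (Fin n) // S.card = ℓ},
      (if T.1.card = ℓ ∧ (univ.image (fun i => if i ∈ E then a i else b i)) ⊆ T.1 ∧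
          (symmDiff S.1 T.1).card = p then (1:ℝ) else 0)
      = ∑ T ∈ univ.filter (fun T : Finset (Fin n) => T.card = ℓ),
          (if T.card = ℓ ∧ (univ.image (fun i => if i ∈ E then a i else b i)) ⊆ T ∧
              (symmDiff S.1 T).card = p then (1:ℝ) else 0) := by
    exact (Finset.sum_subtype (p := fun T : Finset (Fin n) => T.card = ℓ)
      (univ.filter (fun T : Finset (Fin n) => T.card = ℓ)) (fun T => by simp)
      (fun T => if T.card = ℓ ∧ (univ.image (fun i => if i ∈ E then a i else b i)) ⊆ T ∧
          (symmDiff S.1 T).card = p then (1:ℝ) else 0)).symm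
  rw [hsub, Finset.sum_filter]
  have : ∀ T ∈ (univ : Finset (Finset (Fin n))),
      (if T.card = ℓ then
        (if T.card = ℓ ∧ (univ.image (fun i => if i ∈ E then a i else b i)) ⊆ T ∧
            (symmDiff S.1 T).card = p then (1:ℝ) else 0) else 0)
      = (if T.card = ℓ ∧ (univ.image (fun i => if i ∈ E then a i else b i)) ⊆ T ∧
            (symmDiff S.1 T).card = p then (1:ℝ) else 0) := by
    intro T _
    split_ifs with h1 h2 h3 <;> first | rfl | tauto
  rw [Finset.sum_congr rfl this, Finset.sum_boole,
    count_lemma ℓ p m hp S.1 _ S.2 hCcard]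
  congr 2
  -- (S.1 ∩ image c univ).card = (filter (c · ∈ S.1) univ).card
  rw [← card_image_of_injective (univ.filter (fun i => (if i ∈ E then a i else b i) ∈ S.1)) (hcinj E)]
  congr 1
  ext x
  simp only [mem_image, mem_filter, mem_univ, true_and, mem_inter]
  constructor
  · rintro ⟨i, hi, rfl⟩
    exact ⟨hi, ⟨i, rfl⟩⟩
  · rintro ⟨hx, i, rfl⟩
    exact ⟨i, hx, rfl⟩

/-- The vectors `u^φ` (for `φ = (a₁,b₁,…,a_m,b_m)` a sequence of `2m` distinct elements of
`[n]`), with coordinates `u^φ_S = ∏_{i=1}^m (1{a_i ∈ S} - 1{b_i ∈ S})` for `|S| = ℓ`, are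
eigenvectors of the Johnson-scheme matrix `X_{S,T} = 1{|S ∆ T| = p}`, all with a common
eigenvalue `μ_m` depending only on `m`. -/
theorem stmt3 (n ℓ p m : ℕ) (hp : Even p) (hp0 : 0 < p)
    (h1 : p / 2 ≤ ℓ) (h2 : ℓ ≤ n - p / 2) (hm : m ≤ ℓ) :
    ∃ μ : ℝ, ∀ a b : Fin m → Fin n, Function.Injective (Sum.elim a b) →
      Matrix.mulVec
          (Matrix.of fun S T : {S : Finset (Fin n) // S.card = ℓ} =>
            if (symmDiff S.1 T.1).card = p then (1 : ℝ) else 0)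
          (fun S => ∏ i : Fin m,
            ((if a i ∈ S.1 then (1 : ℝ) else 0) - (if b i ∈ S.1 then (1 : ℝ) else 0)))
        = μ • (fun S => ∏ i : Fin m,
            ((if a i ∈ S.1 then (1 : ℝ) else 0) - (if b i ∈ S.1 then (1 : ℝ) else 0))) := by
  classical
  refine ⟨∑ F ∈ (univ : Finset (Fin m)).powerset,
    (-1:ℝ)^F.card * (gfun n ℓ p m (m - F.card) : ℝ), ?_⟩
  intro a b hinj
  have hab : ∀ i j, a i ≠ b j := by
    intro i j h
    have := hinj (a₁ := Sum.inl i) (a₂ := Sum.inr j) (by simpa using h)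
    simp at this
  have ha : Function.Injective a := by
    intro i j h
    have := hinj (a₁ := Sum.inl i) (a₂ := Sum.inl j) (by simpa using h)
    simpa using this
  have hb : Function.Injective b := by
    intro i j h
    have := hinj (a₁ := Sum.inr i) (a₂ := Sum.inr j) (by simpa using h)
    simpa using this
  have hcinj : ∀ E : Finset (Fin m), Function.Injective (fun i => if i ∈ E then a i else b i) := by
    intro E i j h
    simp only at h
    by_cases hi : i ∈ E <;> by_cases hj : j ∈ E
    · rw [if_pos hi, if_pos hj] at h; exact ha h
    · rw [if_pos hi, if_neg hj] at h; exact absurd h (hab i j)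
    · rw [if_neg hi, if_pos hj] at h; exact absurd h.symm (hab j i)
    · rw [if_neg hi, if_neg hj] at h; exact hb h
  funext S
  simp only [Matrix.mulVec, dotProduct, Matrix.of_apply, Pi.smul_apply, smul_eq_mul]
  rw [lhs_eq hp a b hcinj S]
  by_cases hgood : ∀ i : Fin m, ¬ ((a i ∈ S.1) ↔ (b i ∈ S.1))
  · -- all pairs are split by S
    set E₀ : Finset (Fin m) := univ.filter (fun i => a i ∈ S.1) with hE₀
    have hE₀m : E₀.card ≤ m := by
      have := card_le_univ E₀; simpa using this
    have hrhs : ∏ i : Fin m, ((if a i ∈ S.1 then (1:ℝ) else 0) - (if b i ∈ S.1 then 1 else 0))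
        = (-1:ℝ)^(m - E₀.card) := by
      have hfac : ∀ i ∈ (univ : Finset (Fin m)),
          ((if a i ∈ S.1 then (1:ℝ) else 0) - (if b i ∈ S.1 then 1 else 0))
            = (if i ∈ E₀ then (1:ℝ) else -1) := by
        intro i _
        by_cases h : a i ∈ S.1
        · have hbS : b i ∉ S.1 := by have := hgood i; tauto
          simp [hE₀, h, hbS]
        · have hbS : b i ∈ S.1 := by have := hgood i; tauto
          simp [hE₀, h, hbS]
      rw [Finset.prod_congr rfl hfac, ← Finset.prod_mul_prod_compl E₀]
      rw [Finset.prod_congr rfl (fun i hi => if_pos hi),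
        Finset.prod_congr rfl (fun i (hi : i ∈ E₀ᶜ) => if_neg (mem_compl.1 hi)),
        Finset.prod_const_one, Finset.prod_const, one_mul, card_compl,
        Fintype.card_fin]
    rw [hrhs]
    have hfilt : ∀ E : Finset (Fin m),
        (univ.filter (fun i => (if i ∈ E then a i else b i) ∈ S.1)) = (symmDiff E E₀)ᶜ := by
      intro E
      ext i
      simp only [mem_filter, mem_univ, true_and, mem_compl, mem_symmDiff]
      by_cases hi : i ∈ E
      · simp only [if_pos hi]
        have : a i ∈ S.1 ↔ i ∈ E₀ := by simp [hE₀]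
        tauto
      · simp only [if_neg hi]
        have h1 : a i ∈ S.1 ↔ i ∈ E₀ := by simp [hE₀]
        have h2 := hgood i
        tauto
    calc ∑ E ∈ (univ : Finset (Fin m)).powerset,
          (-1:ℝ)^(m - E.card) *
            (gfun n ℓ p m ((univ.filter
              (fun i => (if i ∈ E then a i else b i) ∈ S.1)).card) : ℝ)
        = ∑ F ∈ (univ : Finset (Fin m)).powerset,
            ((-1:ℝ)^F.card * (gfun n ℓ p m (m - F.card) : ℝ)) * (-1:ℝ)^(m - E₀.card) := by
          apply Finset.sum_nbij' (i := fun E => symmDiff E E₀) (j := fun F => symmDiff F E₀)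
          · intro E _; exact mem_powerset.2 (subset_univ _)
          · intro F _; exact mem_powerset.2 (subset_univ _)
          · intro E _; exact symmDiff_symmDiff_cancel_right E₀ E
          · intro F _; exact symmDiff_symmDiff_cancel_right E₀ F
          · intro E _
            rw [hfilt E, card_compl, Fintype.card_fin]
            have hpar : (m - E.card) % 2 = ((symmDiff E E₀).card + (m - E₀.card)) % 2 := by
              have hc := card_symmDiff_add E E₀
              have h1 := card_le_univ E
              have h2 := card_le_univ (symmDiff E E₀)
              simp only [card_univ, Fintype.card_fin] at h1 h2
              omega
            rw [neg_one_pow_congr' hpar, pow_add]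
            ring
      _ = (∑ F ∈ (univ : Finset (Fin m)).powerset,
            (-1:ℝ)^F.card * (gfun n ℓ p m (m - F.card) : ℝ)) * (-1:ℝ)^(m - E₀.card) := by
          rw [Finset.sum_mul]
  · -- some pair is not split: both sides vanish
    push_neg at hgood
    obtain ⟨i₀, hiff⟩ := hgood
    have hrhs : ∏ i : Fin m, ((if a i ∈ S.1 then (1:ℝ) else 0) - (if b i ∈ S.1 then 1 else 0)) = 0 := by
      apply Finset.prod_eq_zero (mem_univ i₀)
      by_cases h : a i₀ ∈ S.1
      · rw [if_pos h, if_pos (hiff.1 h)]; ring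
      · rw [if_neg h, if_neg (fun hbb => h (hiff.2 hbb))]; ring
    rw [hrhs, mul_zero]
    apply Finset.sum_involution (g := fun E _ => symmDiff E {i₀})
    · intro E hE
      have hfeq : (univ.filter (fun i => (if i ∈ symmDiff E {i₀} then a i else b i) ∈ S.1))
          = (univ.filter (fun i => (if i ∈ E then a i else b i) ∈ S.1)) := by
        apply Finset.filter_congr
        intro i _
        by_cases hii : i = i₀
        · subst hii
          have hmem : i ∈ symmDiff E {i} ↔ i ∉ E := by
            simp [mem_symmDiff]
          by_cases hiE : i ∈ E
          · rw [if_neg (by rw [hmem]; exact fun h => h hiE), if_pos hiE]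
            tauto
          · rw [if_pos (hmem.2 hiE), if_neg hiE]
            tauto
        · have hmem : i ∈ symmDiff E {i₀} ↔ i ∈ E := by
            simp [mem_symmDiff, hii]
          by_cases hiE : i ∈ E
          · rw [if_pos (hmem.2 hiE), if_pos hiE]
          · rw [if_neg (fun h => hiE (hmem.1 h)), if_neg hiE]
      rw [hfeq]
      have hpar : ((m - E.card) + (m - (symmDiff E {i₀}).card)) % 2 = 1 := by
        have hc := card_symmDiff_add E {i₀}
        have hu1 := card_le_univ E
        have hu2 := card_le_univ (symmDiff E {i₀})
        simp only [card_univ, Fintype.card_fin, card_singleton] at hc hu1 hu2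
        by_cases hiE : i₀ ∈ E
        · have hone : E ∩ {i₀} = {i₀} := by
            ext x; simp only [mem_inter, mem_singleton]
            constructor
            · tauto
            · rintro rfl; exact ⟨hiE, rfl⟩
          rw [hone, card_singleton] at hc
          omega
        · have hzero : E ∩ {i₀} = ∅ := by
            ext x; simp only [mem_inter, mem_singleton, notMem_empty, iff_false]
            rintro ⟨hx, rfl⟩; exact hiE hx
          rw [hzero, card_empty] at hc
          omega
      rw [← add_mul]
      rw [neg_one_pow_add_eq_zero hpar, zero_mul]
    · intro E hE _
      intro h
      have h1 : i₀ ∈ symmDiff E {i₀} ↔ i₀ ∉ E := by simp [mem_symmDiff]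
      rw [h] at h1
      tauto
    · intro E hE; exact symmDiff_symmDiff_cancel_right {i₀} E
    · intro E hE; exact mem_powerset.2 (subset_univ _)
end

section
/- Suppose 3 ≤ p ≤ √n, p even, and ℓ < n/p². Then for all 0 ≤ m ≤ ℓ, the eigenvalues μ_m of the Johnson-scheme matrix X satisfy |μ_m|/μ_0 ≤ max{ (1 − m/ℓ)^{p/2}, p/n }, where μ_0 = C(ℓ, p/2)·C(n−ℓ, p/2). -/
open Finset

/-- Alternating sum with nonnegative, eventually-decreasing terms lies in `[0, t 0]`. -/
private lemma alt_pair (N : ℕ) : ∀ (t : ℕ → ℝ), (∀ s, 0 ≤ t s) →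
    (∀ s, s + 1 ≤ N → t (s + 1) ≤ t s) →
    0 ≤ (∑ s ∈ Finset.range (N + 1), (-1 : ℝ) ^ s * t s) ∧
      (∑ s ∈ Finset.range (N + 1), (-1 : ℝ) ^ s * t s) ≤ t 0 := by
  induction N with
  | zero => intro t h0 _; simp [h0 0]
  | succ N IH =>
    intro t h0 hm
    have e : (∑ s ∈ Finset.range (N + 2), (-1 : ℝ) ^ s * t s)
        = t 0 - ∑ s ∈ Finset.range (N + 1), (-1 : ℝ) ^ s * t (s + 1) := by
      rw [Finset.sum_range_succ' (fun s => (-1 : ℝ) ^ s * t s) (N + 1)]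
      have : ∀ s, (-1 : ℝ) ^ (s + 1) * t (s + 1) = -((-1 : ℝ) ^ s * t (s + 1)) := by
        intro s; ring
      rw [Finset.sum_congr rfl fun s _ => this s, Finset.sum_neg_distrib]
      simp; ring
    obtain ⟨h1, h2⟩ := IH (fun s => t (s + 1)) (fun s => h0 (s + 1))
      (fun s hs => hm (s + 1) (by omega))
    have h01 := hm 0 (by omega)
    constructor
    · rw [e]; linarith
    · rw [e]; linarith [h0 1]

/-- Alternating sum bound with a prefix of zero terms. -/
private lemma alt_abs (t : ℕ → ℝ) (N s0 : ℕ) (hs0 : s0 ≤ N)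
    (h0 : ∀ s, 0 ≤ t s) (hz : ∀ s, s < s0 → t s = 0)
    (hm : ∀ s, s0 ≤ s → s + 1 ≤ N → t (s + 1) ≤ t s) :
    |∑ s ∈ Finset.range (N + 1), (-1 : ℝ) ^ s * t s| ≤ t s0 := by
  obtain ⟨hk1, hk2⟩ := alt_pair (N - s0) (fun k => t (s0 + k)) (fun k => h0 _)
    (fun k hk => hm (s0 + k) (by omega) (by omega))
  have split : (∑ s ∈ Finset.range (N + 1), (-1 : ℝ) ^ s * t s)
      = (-1 : ℝ) ^ s0 * ∑ k ∈ Finset.range (N - s0 + 1), (-1 : ℝ) ^ k * t (s0 + k) := by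
    conv_lhs => rw [Finset.range_eq_Ico,
      ← Finset.sum_Ico_consecutive _ (Nat.zero_le s0) (by omega : s0 ≤ N + 1)]
    have z1 : (∑ s ∈ Finset.Ico 0 s0, (-1 : ℝ) ^ s * t s) = 0 :=
      Finset.sum_eq_zero fun s hs => by
        rw [hz s (by simpa using (Finset.mem_Ico.mp hs).2)]; ring
    rw [z1, zero_add, Finset.sum_Ico_eq_sum_range]
    have hN : N + 1 - s0 = N - s0 + 1 := by omega
    rw [hN, Finset.mul_sum]
    exact Finset.sum_congr rfl fun k _ => by rw [pow_add]; ring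
  rw [split, abs_mul, abs_pow, abs_neg, abs_one, one_pow, one_mul,
      abs_of_nonneg hk1]
  simpa using hk2

/-- `C(a,q) * (a+k)^q ≤ C(a+k,q) * a^q`. -/
private lemma chooseA : ∀ (q a k : ℕ),
    (a.choose q) * (a + k) ^ q ≤ ((a + k).choose q) * a ^ q := by
  intro q
  induction q with
  | zero => intro a k; simp
  | succ q IH =>
    intro a k
    by_cases hqa : a < q + 1
    · rw [Nat.choose_eq_zero_of_lt hqa]; simp
    push_neg at hqa
    have I1 := Nat.choose_succ_right_eq a q
    have I2 := Nat.choose_succ_right_eq (a + k) q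
    have hstep : (a - q) * (a + k) ≤ (a + k - q) * a := by
      obtain ⟨d, rfl⟩ := Nat.exists_eq_add_of_le hqa
      have e1 : q + 1 + d - q = d + 1 := by omega
      have e2 : q + 1 + d + k - q = d + 1 + k := by omega
      rw [e1, e2]
      nlinarith
    have key : a.choose (q + 1) * (a + k) ^ (q + 1) * (q + 1)
        ≤ (a + k).choose (q + 1) * a ^ (q + 1) * (q + 1) := by
      calc a.choose (q + 1) * (a + k) ^ (q + 1) * (q + 1)
          = (a.choose (q + 1) * (q + 1)) * (a + k) ^ (q + 1) := by ring
        _ = (a.choose q * (a + k) ^ q) * ((a - q) * (a + k)) := by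
            rw [I1]; ring
        _ ≤ ((a + k).choose q * a ^ q) * ((a - q) * (a + k)) :=
            Nat.mul_le_mul_right _ (IH a k)
        _ ≤ ((a + k).choose q * a ^ q) * ((a + k - q) * a) :=
            Nat.mul_le_mul_left _ hstep
        _ = ((a + k).choose q * (a + k - q)) * a ^ (q + 1) := by ring
        _ = ((a + k).choose (q + 1) * (q + 1)) * a ^ (q + 1) := by rw [← I2]
        _ = (a + k).choose (q + 1) * a ^ (q + 1) * (q + 1) := by ring
    exact Nat.le_of_mul_le_mul_right key (Nat.succ_pos q)

/-- `C(a,c) ≤ C(a+k, c+k)`. -/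
private lemma chooseB (a c : ℕ) : ∀ k : ℕ, a.choose c ≤ (a + k).choose (c + k) := by
  intro k
  induction k with
  | zero => simp
  | succ k IH =>
    have e1 : a + (k + 1) = (a + k) + 1 := by omega
    have e2 : c + (k + 1) = (c + k) + 1 := by omega
    rw [e1, e2, Nat.choose_succ_succ]
    omega

/-- `C(a,·)` is monotone below half. -/
private lemma chooseC (a : ℕ) : ∀ i j : ℕ, j ≤ i → 2 * i ≤ a → a.choose j ≤ a.choose i := by
  intro i
  induction i with
  | zero => intro j hj _; simp [Nat.le_zero.mp hj]
  | succ i IH =>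
    intro j hj ha
    rcases Nat.lt_or_ge j (i + 1) with h | h
    · exact le_trans (IH j (by omega) (by omega))
        (Nat.choose_le_succ_of_lt_half_left (by omega))
    · have : j = i + 1 := by omega
      subst this; exact le_rfl

/-- Monotonicity of consecutive Johnson terms. -/
private lemma mono_nat (m b c q s : ℕ) (hs1 : s + 1 ≤ m) (hs2 : s + 1 ≤ q)
    (hb : q ≤ b + s) (hbig : m * q * q < c - q) :
    m.choose (s + 1) * b.choose (q - (s + 1)) * c.choose (q - (s + 1))
      ≤ m.choose s * b.choose (q - s) * c.choose (q - s) := by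
  set u := q - s - 1 with hu
  have e : q - (s + 1) = u := by omega
  have eu : u + 1 = q - s := by omega
  rw [e]
  have I1 := Nat.choose_succ_right_eq m s
  have I2 := Nat.choose_succ_right_eq b u
  have I3 := Nat.choose_succ_right_eq c u
  rw [eu] at I2 I3
  -- I2 : b.choose (q-s) * (q-s) = b.choose u * (b - u), etc.
  have hbu : 1 ≤ b - u := by omega
  have hcu : c - q ≤ c - u := by omega
  have hcq1 : 1 ≤ c - q := by omega
  have hkey : (m - s) * (q - s) * (q - s) ≤ (s + 1) * (b - u) * (c - u) := by
    have l1 : (m - s) * (q - s) * (q - s) ≤ m * q * q := by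
      have := Nat.mul_le_mul (Nat.mul_le_mul (Nat.sub_le m s) (Nat.sub_le q s)) (Nat.sub_le q s)
      simpa using this
    have l2 : c - u ≤ (s + 1) * (b - u) * (c - u) := by
      have h1 : 1 * (c - u) ≤ ((s + 1) * (b - u)) * (c - u) :=
        Nat.mul_le_mul_right _ (by nlinarith)
      simpa using h1
    omega
  have hD : 0 < (s + 1) * (b - u) * (c - u) := by
    have : 0 < c - u := by omega
    positivity
  apply Nat.le_of_mul_le_mul_right _ hD
  calc m.choose (s + 1) * b.choose u * c.choose u * ((s + 1) * (b - u) * (c - u))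
      = (m.choose (s + 1) * (s + 1)) * (b.choose u * (b - u)) * (c.choose u * (c - u)) := by ring
    _ = (m.choose s * (m - s)) * (b.choose (q - s) * (q - s)) * (c.choose (q - s) * (q - s)) := by
        rw [I1, ← I2, ← I3]
    _ = (m.choose s * b.choose (q - s) * c.choose (q - s)) * ((m - s) * (q - s) * (q - s)) := by
        ring
    _ ≤ (m.choose s * b.choose (q - s) * c.choose (q - s)) * ((s + 1) * (b - u) * (c - u)) :=
        Nat.mul_le_mul_left _ hkey

/-- For even `p` with `3 ≤ p ≤ √n` and `ℓ < n/p²`, the Johnson-scheme eigenvalues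
`μ_m` satisfy `|μ_m|/μ_0 ≤ max{(1 - m/ℓ)^{p/2}, p/n}` for all `0 ≤ m ≤ ℓ`,
where `μ_0 = C(ℓ, p/2)·C(n-ℓ, p/2)`. -/
theorem stmt5 (n ℓ p m : ℕ) (hp : Even p) (hp3 : 3 ≤ p) (hpn : p ^ 2 ≤ n)
    (hl : ℓ * p ^ 2 < n) (h1 : p / 2 ≤ ℓ) (h2 : ℓ ≤ n - p / 2) (hm : m ≤ ℓ) :
    |∑ s ∈ Finset.range (min m (p / 2) + 1),
        (-1 : ℝ) ^ s * (m.choose s) * ((ℓ - m).choose (p / 2 - s))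
          * ((n - ℓ - m).choose (p / 2 - s))|
      / ((ℓ.choose (p / 2) : ℝ) * ((n - ℓ).choose (p / 2)))
    ≤ max ((1 - (m : ℝ) / ℓ) ^ (p / 2)) ((p : ℝ) / n) := by
  obtain ⟨r, hr⟩ := hp
  set q : ℕ := p / 2 with hq
  have hp2q : p = 2 * q := by omega
  have hq2 : 2 ≤ q := by omega
  have hlq : q ≤ ℓ := h1
  -- size facts
  have hn4 : 4 * (ℓ * (q * q)) < n := by
    have : ℓ * p ^ 2 = 4 * (ℓ * (q * q)) := by rw [hp2q]; ring
    omega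
  have hqq4 : 4 ≤ q * q := Nat.mul_le_mul hq2 hq2
  have hlA : ℓ ≤ ℓ * (q * q) := Nat.le_mul_of_pos_right ℓ (by omega)
  have hqA : q ≤ ℓ * (q * q) := le_trans hlq hlA
  have hmA : m ≤ ℓ * (q * q) := le_trans hm hlA
  have hmqq : m * q * q ≤ ℓ * (q * q) := by
    calc m * q * q = m * (q * q) := by ring
      _ ≤ ℓ * (q * q) := Nat.mul_le_mul_right _ hm
  have hlpos : 0 < ℓ := by omega
  have hnpos : 0 < n := by omega
  have hqnl : q ≤ n - ℓ := by omega
  -- positivity of μ₀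
  have hmu0 : 0 < ℓ.choose q * (n - ℓ).choose q :=
    Nat.mul_pos (Nat.choose_pos hlq) (Nat.choose_pos hqnl)
  have hmu0R : (0 : ℝ) < (ℓ.choose q : ℝ) * ((n - ℓ).choose q : ℝ) := by
    have h := Nat.cast_pos (α := ℝ) |>.mpr hmu0
    push_cast at h
    exact h
  -- the term function
  set t : ℕ → ℝ := fun s =>
    ((m.choose s * ((ℓ - m).choose (q - s)) * ((n - ℓ - m).choose (q - s)) : ℕ) : ℝ) with ht
  have hsum : (∑ s ∈ Finset.range (min m q + 1),
      (-1 : ℝ) ^ s * (m.choose s) * ((ℓ - m).choose (q - s)) * ((n - ℓ - m).choose (q - s)))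
      = ∑ s ∈ Finset.range (min m q + 1), (-1 : ℝ) ^ s * t s :=
    Finset.sum_congr rfl fun s _ => by simp only [ht]; push_cast; ring
  set N : ℕ := min m q with hN
  set s0 : ℕ := q - (ℓ - m) with hs0def
  have hs0N : s0 ≤ N := by omega
  have h0 : ∀ s, 0 ≤ t s := fun s => by simp only [ht]; positivity
  have hz : ∀ s, s < s0 → t s = 0 := by
    intro s hs
    simp only [ht]
    have : (ℓ - m) < q - s := by omega
    rw [Nat.choose_eq_zero_of_lt this]
    simp
  have hmono : ∀ s, s0 ≤ s → s + 1 ≤ N → t (s + 1) ≤ t s := by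
    intro s hss hsN
    simp only [ht]
    have hbig : m * q * q < (n - ℓ - m) - q := by omega
    exact_mod_cast mono_nat m (ℓ - m) (n - ℓ - m) q s (by omega) (by omega) (by omega) hbig
  have habs := alt_abs t N s0 hs0N h0 hz hmono
  rw [hsum]
  rcases Nat.lt_or_ge (ℓ - m) q with hcase | hcase
  · -- Case B : ℓ - m < q, use the p/n bound
    refine le_trans ?_ (le_max_right _ _)
    set j : ℕ := ℓ - m with hj
    have hs0j : q - s0 = j := by omega
    have ets0 : t s0 = ((m.choose s0 * (n - ℓ - m).choose j : ℕ) : ℝ) := by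
      simp only [ht, hs0j, Nat.choose_self]
      push_cast; ring
    -- key ℕ inequality : t s0 * n ≤ p * μ₀
    have c1 : m.choose s0 ≤ ℓ.choose q := by
      have := chooseB m s0 j
      have e1 : m + j = ℓ := by omega
      have e2 : s0 + j = q := by omega
      rwa [e1, e2] at this
    have c2 : (n - ℓ - m).choose j ≤ (n - ℓ).choose j :=
      Nat.choose_le_choose j (by omega)
    have c3 : (n - ℓ).choose j ≤ (n - ℓ).choose (q - 1) :=
      chooseC (n - ℓ) (q - 1) j (by omega) (by omega)
    have c4 : (n - ℓ).choose (q - 1) * (n - ℓ - (q - 1)) = (n - ℓ).choose q * q := by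
      have := Nat.choose_succ_right_eq (n - ℓ) (q - 1)
      have e : q - 1 + 1 = q := by omega
      rw [e] at this
      omega
    have c5 : n ≤ 2 * (n - ℓ - (q - 1)) := by omega
    have keyNat : m.choose s0 * (n - ℓ - m).choose j * n
        ≤ p * (ℓ.choose q * (n - ℓ).choose q) := by
      calc m.choose s0 * (n - ℓ - m).choose j * n
          ≤ ℓ.choose q * ((n - ℓ).choose (q - 1) * (2 * (n - ℓ - (q - 1)))) := by
            have := Nat.mul_le_mul (Nat.mul_le_mul c1 (le_trans c2 c3)) c5
            calc m.choose s0 * (n - ℓ - m).choose j * n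
                ≤ ℓ.choose q * (n - ℓ).choose (q - 1) * (2 * (n - ℓ - (q - 1))) := this
              _ = ℓ.choose q * ((n - ℓ).choose (q - 1) * (2 * (n - ℓ - (q - 1)))) := by ring
        _ = ℓ.choose q * (2 * ((n - ℓ).choose (q - 1) * (n - ℓ - (q - 1)))) := by ring
        _ = ℓ.choose q * (2 * ((n - ℓ).choose q * q)) := by rw [c4]
        _ = p * (ℓ.choose q * (n - ℓ).choose q) := by rw [hp2q]; ring
    -- conclude
    rw [div_le_iff₀ hmu0R]
    refine le_trans habs ?_
    rw [ets0]
    rw [div_mul_eq_mul_div, le_div_iff₀ (by exact_mod_cast hnpos : (0:ℝ) < (n:ℝ))]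
    calc ((m.choose s0 * (n - ℓ - m).choose j : ℕ) : ℝ) * n
        = ((m.choose s0 * (n - ℓ - m).choose j * n : ℕ) : ℝ) := by push_cast; ring
      _ ≤ ((p * (ℓ.choose q * (n - ℓ).choose q) : ℕ) : ℝ) := by exact_mod_cast keyNat
      _ = (p : ℝ) * ((ℓ.choose q : ℝ) * ((n - ℓ).choose q : ℝ)) := by push_cast; ring
  · -- Case A : q ≤ ℓ - m, use the (1 - m/ℓ)^q bound
    refine le_trans ?_ (le_max_left _ _)
    have hs00 : s0 = 0 := by omega
    rw [hs00] at habs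
    have et0 : t 0 = (((ℓ - m).choose q * (n - ℓ - m).choose q : ℕ) : ℝ) := by
      simp only [ht, Nat.choose_zero_right, Nat.sub_zero]
      push_cast; ring
    have keyNat : (ℓ - m).choose q * (n - ℓ - m).choose q * ℓ ^ q
        ≤ (ℓ - m) ^ q * (ℓ.choose q * (n - ℓ).choose q) := by
      have cA : (ℓ - m).choose q * ℓ ^ q ≤ ℓ.choose q * (ℓ - m) ^ q := by
        have := chooseA q (ℓ - m) m
        have e : ℓ - m + m = ℓ := by omega
        rwa [e] at this
      have cB : (n - ℓ - m).choose q ≤ (n - ℓ).choose q :=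
        Nat.choose_le_choose q (by omega)
      calc (ℓ - m).choose q * (n - ℓ - m).choose q * ℓ ^ q
          = ((ℓ - m).choose q * ℓ ^ q) * (n - ℓ - m).choose q := by ring
        _ ≤ (ℓ.choose q * (ℓ - m) ^ q) * (n - ℓ).choose q := Nat.mul_le_mul cA cB
        _ = (ℓ - m) ^ q * (ℓ.choose q * (n - ℓ).choose q) := by ring
    have hrw : (1 - (m : ℝ) / ℓ) = ((ℓ - m : ℕ) : ℝ) / (ℓ : ℝ) := by
      rw [Nat.cast_sub hm]
      field_simp
    rw [hrw, div_pow]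
    have hlR : (0 : ℝ) < (ℓ : ℝ) ^ q := by positivity
    rw [div_le_div_iff₀ hmu0R hlR]
    calc |∑ s ∈ Finset.range (N + 1), (-1 : ℝ) ^ s * t s| * (ℓ : ℝ) ^ q
        ≤ t 0 * (ℓ : ℝ) ^ q := by
          apply mul_le_mul_of_nonneg_right habs (by positivity)
      _ = (((ℓ - m).choose q * (n - ℓ - m).choose q * ℓ ^ q : ℕ) : ℝ) := by
          rw [et0]; push_cast; ring
      _ ≤ (((ℓ - m) ^ q * (ℓ.choose q * (n - ℓ).choose q) : ℕ) : ℝ) := by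
          exact_mod_cast keyNat
      _ = ((ℓ - m : ℕ) : ℝ) ^ q * ((ℓ.choose q : ℝ) * ((n - ℓ).choose q : ℝ)) := by
          push_cast; ring
end

section
/- If m ≤ ℓ − p/2, then μ_m ≤ C(ℓ−m, p/2)·C(n−ℓ−m, p/2); in particular μ_m/μ_0 ≤ ((ℓ−m)/ℓ)^{p/2}, under the assumptions 3 ≤ p ≤ √n and ℓ < n/p². -/
open Finset

-- alternating sum bound
lemma alt_sum_le (f : ℕ → ℝ) (hmono : ∀ i, f (i+1) ≤ f i) (hpos : ∀ i, 0 ≤ f i) :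
    ∀ k, (∑ s ∈ Finset.range k, (-1:ℝ)^s * f s) ≤ f 0 := by
  have heven : ∀ j, (∑ s ∈ Finset.range (2*j), (-1:ℝ)^s * f s) ≤ f 0 - f (2*j) := by
    intro j
    induction j with
    | zero => simp
    | succ j ih =>
      have h2 : 2*(j+1) = (2*j)+1+1 := by ring
      rw [h2, Finset.sum_range_succ, Finset.sum_range_succ]
      have e1 : (-1:ℝ)^(2*j) = 1 := by rw [pow_mul]; norm_num
      have e2 : (-1:ℝ)^(2*j+1) = -1 := by rw [pow_succ, e1]; ring
      rw [e1, e2]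
      have := hmono (2*j+1)
      have h3 : f ((2*j)+1+1) = f (2*j+1+1) := rfl
      linarith
  intro k
  rcases Nat.even_or_odd k with ⟨j, hj⟩ | ⟨j, hj⟩
  · have hk : k = 2*j := by omega
    rw [hk]
    have := hpos (2*j)
    linarith [heven j]
  · have hk : k = 2*j + 1 := by omega
    rw [hk, Finset.sum_range_succ]
    have e1 : (-1:ℝ)^(2*j) = 1 := by rw [pow_mul]; norm_num
    rw [e1]
    linarith [heven j]

/-- If `m ≤ ℓ - p/2` then the Johnson-scheme eigenvalue `μ_m` satisfies
`μ_m ≤ C(ℓ-m, p/2)·C(n-ℓ-m, p/2)`; in particular `μ_m/μ_0 ≤ ((ℓ-m)/ℓ)^{p/2}`,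
under the assumptions `3 ≤ p ≤ √n` (`p` even) and `ℓ < n/p²`. -/
theorem stmt6 (n ℓ p m : ℕ) (hp : Even p) (hp3 : 3 ≤ p) (hpn : p ^ 2 ≤ n)
    (hl : ℓ * p ^ 2 < n) (h1 : p / 2 ≤ ℓ) (h2 : ℓ ≤ n - p / 2)
    (hm : m + p / 2 ≤ ℓ) :
    (∑ s ∈ Finset.range (min m (p / 2) + 1),
        (-1 : ℝ) ^ s * (m.choose s) * ((ℓ - m).choose (p / 2 - s))
          * ((n - ℓ - m).choose (p / 2 - s)))
      ≤ ((ℓ - m).choose (p / 2) : ℝ) * ((n - ℓ - m).choose (p / 2))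
    ∧ (∑ s ∈ Finset.range (min m (p / 2) + 1),
        (-1 : ℝ) ^ s * (m.choose s) * ((ℓ - m).choose (p / 2 - s))
          * ((n - ℓ - m).choose (p / 2 - s)))
        / ((ℓ.choose (p / 2) : ℝ) * ((n - ℓ).choose (p / 2)))
      ≤ (((ℓ : ℝ) - m) / ℓ) ^ (p / 2) := by
  obtain ⟨r, hr⟩ := hp
  set q := p / 2 with hq
  clear_value q
  have hq2 : 2 ≤ q := by omega
  have hpq : p = 2 * q := by omega
  have hq4 : p ^ 2 = 4 * (q * q) := by rw [hpq]; ring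
  have hqq : q ≤ q * q := Nat.le_mul_of_pos_left q (by omega)
  have hnq : ℓ + q ≤ n := by omega
  -- key numeric inequality
  have hnum : ℓ * (q * q) + 2 * ℓ < n := by
    have h4 : ℓ * p ^ 2 = 4 * (ℓ * (q * q)) := by rw [hpq]; ring
    have hℓ2 : 2 ≤ ℓ := le_trans hq2 h1
    have h8 : 2 * 4 ≤ ℓ * (q * q) := Nat.mul_le_mul hℓ2 (Nat.mul_le_mul hq2 hq2)
    have hℓf : ℓ ≤ ℓ * (q * q) := Nat.le_mul_of_pos_right ℓ (by omega)
    omega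
  set K := min m q with hK
  clear_value K
  -- natural number antitonicity
  have key : ∀ s : ℕ, s < K →
      (m.choose (s+1)) * ((ℓ - m).choose (q - (s+1))) * ((n - ℓ - m).choose (q - (s+1)))
        ≤ (m.choose s) * ((ℓ - m).choose (q - s)) * ((n - ℓ - m).choose (q - s)) := by
    intro s hs
    have hsm : s < m := by omega
    have hsq : s < q := by omega
    set A := ℓ - m with hA
    set B := n - ℓ - m with hB
    set t := q - s - 1 with ht
    have ht1 : q - s = t + 1 := by omega
    have ht2 : q - (s+1) = t := by omega
    have hAt : 1 ≤ A - t := by omega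
    have hBt : ℓ * (q * q) + 1 ≤ B - t := by
      have htq : t ≤ q := by omega
      omega
    rw [ht1, ht2]
    set D := (s+1) * ((A - t) * (B - t)) with hD
    have hDpos : 0 < D := by
      have : 0 < B - t := by omega
      positivity
    apply Nat.le_of_mul_le_mul_right _ hDpos
    have i1 : m.choose (s+1) * (s+1) = m.choose s * (m - s) := Nat.choose_succ_right_eq m s
    have i2 : A.choose t * (A - t) = A.choose (t+1) * (t+1) :=
      (Nat.choose_succ_right_eq A t).symm
    have i3 : B.choose t * (B - t) = B.choose (t+1) * (t+1) :=
      (Nat.choose_succ_right_eq B t).symm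
    have hnonlin : (m - s) * ((t+1) * (t+1)) ≤ (s+1) * ((A - t) * (B - t)) := by
      have h1' : (m - s) * ((t+1) * (t+1)) ≤ ℓ * (q * q) := by
        apply Nat.mul_le_mul (by omega)
        exact Nat.mul_le_mul (by omega) (by omega)
      calc (m - s) * ((t+1) * (t+1)) ≤ ℓ * (q*q) := h1'
        _ ≤ B - t := by omega
        _ ≤ (A - t) * (B - t) := Nat.le_mul_of_pos_left _ (by omega)
        _ ≤ (s+1) * ((A - t) * (B - t)) := Nat.le_mul_of_pos_left _ (by omega)
    calc m.choose (s+1) * A.choose t * B.choose t * D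
        = (m.choose (s+1) * (s+1)) * ((A.choose t * (A - t)) * (B.choose t * (B - t))) := by
          rw [hD]; ring
      _ = (m.choose s * (m - s)) * ((A.choose (t+1) * (t+1)) * (B.choose (t+1) * (t+1))) := by
          rw [i1, i2, i3]
      _ = m.choose s * (A.choose (t+1) * B.choose (t+1)) * ((m-s) * ((t+1)*(t+1))) := by ring
      _ ≤ m.choose s * (A.choose (t+1) * B.choose (t+1)) * ((s+1) * ((A-t) * (B-t))) :=
          Nat.mul_le_mul_left _ hnonlin
      _ = m.choose s * A.choose (t+1) * B.choose (t+1) * D := by rw [hD]; ring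
  -- real-valued sequence
  set a : ℕ → ℝ := fun s =>
    (m.choose s : ℝ) * ((ℓ - m).choose (q - s)) * ((n - ℓ - m).choose (q - s)) with ha
  set f : ℕ → ℝ := fun s => a (min s K) with hf
  have hmono : ∀ i, f (i+1) ≤ f i := by
    intro i
    rcases le_or_gt K i with h | h
    · simp only [hf]
      rw [min_eq_right h, min_eq_right (by omega : K ≤ i + 1)]
    · simp only [hf]
      rw [min_eq_left (by omega : i + 1 ≤ K), min_eq_left (le_of_lt h)]
      have := key i h
      simp only [ha]
      push_cast
      exact_mod_cast this
  have hposf : ∀ i, 0 ≤ f i := by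
    intro i; simp only [hf, ha]; positivity
  have hsum_eq : (∑ s ∈ Finset.range (K + 1),
      (-1 : ℝ) ^ s * (m.choose s) * ((ℓ - m).choose (q - s))
        * ((n - ℓ - m).choose (q - s))) = ∑ s ∈ Finset.range (K+1), (-1:ℝ)^s * f s := by
    apply Finset.sum_congr rfl
    intro s hs
    simp only [Finset.mem_range] at hs
    simp only [hf, ha, min_eq_left (by omega : s ≤ K)]
    ring
  have hf0 : f 0 = ((ℓ - m).choose q : ℝ) * ((n - ℓ - m).choose q) := by
    simp [hf, ha]
  have part1 : (∑ s ∈ Finset.range (K + 1),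
      (-1 : ℝ) ^ s * (m.choose s) * ((ℓ - m).choose (q - s))
        * ((n - ℓ - m).choose (q - s)))
      ≤ ((ℓ - m).choose q : ℝ) * ((n - ℓ - m).choose q) := by
    rw [hsum_eq, ← hf0]
    exact alt_sum_le f hmono hposf (K+1)
  refine ⟨part1, ?_⟩
  -- part 2
  have hμpos : (0:ℝ) < (ℓ.choose q : ℝ) * ((n - ℓ).choose q) := by
    have c1 : 0 < ℓ.choose q := Nat.choose_pos h1
    have c2 : 0 < (n - ℓ).choose q := Nat.choose_pos (by omega)
    positivity
  have hratioN : (ℓ - m).choose q * ℓ ^ q ≤ (ℓ - m) ^ q * ℓ.choose q := by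
    have hdF : (ℓ - m).descFactorial q * ℓ ^ q ≤ (ℓ - m) ^ q * ℓ.descFactorial q := by
      rw [Nat.descFactorial_eq_prod_range, Nat.descFactorial_eq_prod_range]
      calc (∏ i ∈ range q, (ℓ - m - i)) * ℓ ^ q
          = ∏ i ∈ range q, ((ℓ - m - i) * ℓ) := by
            rw [Finset.prod_mul_distrib, Finset.prod_const, Finset.card_range]
        _ ≤ ∏ i ∈ range q, ((ℓ - m) * (ℓ - i)) := by
            apply Finset.prod_le_prod' -- termwise; fix name below if needed
            intro i _
            rcases le_or_gt i (ℓ - m) with h | h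
            · have e1 : ℓ - m - i + i = ℓ - m := by omega
              have e2 : ℓ - i = (ℓ - m - i) + m := by omega
              set c := ℓ - m - i with hc
              have e4 : ℓ - m = c + i := by omega
              have e3 : ℓ = c + i + m := by omega
              rw [e4, e2, e3]
              nlinarith [Nat.zero_le (i * m)]
            · have : ℓ - m - i = 0 := by omega
              rw [this]; simp
        _ = (ℓ - m) ^ q * ∏ i ∈ range q, (ℓ - i) := by
            rw [Finset.prod_mul_distrib, Finset.prod_const, Finset.card_range]
    rw [Nat.descFactorial_eq_factorial_mul_choose, Nat.descFactorial_eq_factorial_mul_choose] at hdF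
    have hdF' : Nat.factorial q * ((ℓ - m).choose q * ℓ ^ q)
        ≤ Nat.factorial q * ((ℓ - m) ^ q * ℓ.choose q) := by
      calc Nat.factorial q * ((ℓ - m).choose q * ℓ ^ q)
          = Nat.factorial q * (ℓ - m).choose q * ℓ ^ q := by ring
        _ ≤ (ℓ - m) ^ q * (Nat.factorial q * ℓ.choose q) := hdF
        _ = Nat.factorial q * ((ℓ - m) ^ q * ℓ.choose q) := by ring
    exact Nat.le_of_mul_le_mul_left hdF' (Nat.factorial_pos q)
  have hmℓ : m ≤ ℓ := by omega
  have hcast : ((ℓ:ℝ) - m) = ((ℓ - m : ℕ) : ℝ) := by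
    rw [Nat.cast_sub hmℓ]
  have hℓpos : (0:ℝ) < ℓ := by
    have : 0 < ℓ := by omega
    exact_mod_cast this
  have hratioR : ((ℓ - m).choose q : ℝ) / (ℓ.choose q : ℝ) ≤ (((ℓ:ℝ) - m) / ℓ) ^ q := by
    rw [hcast, div_pow, div_le_div_iff₀ (by exact_mod_cast Nat.choose_pos h1) (by positivity)]
    push_cast
    exact_mod_cast hratioN
  have hsecond : ((n - ℓ - m).choose q : ℝ) / ((n - ℓ).choose q : ℝ) ≤ 1 := by
    rw [div_le_one (by exact_mod_cast Nat.choose_pos (show q ≤ n - ℓ by omega))]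
    exact_mod_cast Nat.choose_le_choose q (by omega : n - ℓ - m ≤ n - ℓ)
  calc (∑ s ∈ Finset.range (K + 1),
        (-1 : ℝ) ^ s * (m.choose s) * ((ℓ - m).choose (q - s))
          * ((n - ℓ - m).choose (q - s)))
        / ((ℓ.choose q : ℝ) * ((n - ℓ).choose q))
      ≤ (((ℓ - m).choose q : ℝ) * ((n - ℓ - m).choose q))
        / ((ℓ.choose q : ℝ) * ((n - ℓ).choose q)) := by
        apply div_le_div_of_nonneg_right part1 hμpos.le
    _ = (((ℓ - m).choose q : ℝ) / (ℓ.choose q : ℝ))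
        * (((n - ℓ - m).choose q : ℝ) / ((n - ℓ).choose q : ℝ)) := by
        rw [div_mul_div_comm]
    _ ≤ (((ℓ:ℝ) - m) / ℓ) ^ q * 1 := by
        apply mul_le_mul hratioR hsecond (by positivity) (by rw [hcast]; positivity)
    _ = (((ℓ:ℝ) - m) / ℓ) ^ q := by ring
end

section
/- Let M = λX + Z where X is symmetric with top eigenvalue μ_0 attained at unit eigenvector u_0, and suppose X has eigenvalues μ_0 ≥ μ_1 ≥ … with eigenspaces Y_0, Y_1, …. If v_0 is a unit-norm leading eigenvector of M and v_0 = v^{(m)} + v^⊥ is its orthogonal decomposition with v^{(m)} in the span of the top m+1 eigenspaces of X, then ‖v^⊥‖² ≤ 2‖Z‖_op / (λ(μ_0 − μ_{m+1})). -/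
open scoped RealInnerProductSpace

/-! Since `X` preserves `W` and is symmetric, the Rayleigh quotient of `X` at `v0` splits
over `v0 = vm + vperp`, so the spectral gap forces `⟪v0, X v0⟫ ≤ μ0 - (μ0 - μm1) ‖vperp‖²`.
On the other hand `v0` maximises the Rayleigh quotient of `λX + Z`, so comparing with `u0`
and absorbing `Z` twice at cost `‖Z‖` each gives `λ ⟪v0, X v0⟫ ≥ λ μ0 - 2 ‖Z‖`. -/

section

variable {E : Type*} [NormedAddCommGroup E] [InnerProductSpace ℝ E]

lemma abs_inner_apply_self_le (T : E →L[ℝ] E) (w : E) : |⟪w, T w⟫| ≤ ‖T‖ * ‖w‖ ^ 2 :=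
  calc |⟪w, T w⟫| ≤ ‖w‖ * ‖T w‖ := abs_real_inner_le_norm _ _
    _ ≤ ‖w‖ * (‖T‖ * ‖w‖) := by gcongr; exact T.le_opNorm w
    _ = ‖T‖ * ‖w‖ ^ 2 := by ring

lemma inner_apply_self_eq_of_apply_eq_smul {T : E →L[ℝ] E} {v : E} {β : ℝ} (hv : ‖v‖ = 1)
    (h : T v = β • v) : ⟪v, T v⟫ = β := by
  rw [h, real_inner_smul_right, real_inner_self_eq_norm_sq, hv, one_pow, mul_one]

lemma LinearMap.IsSymmetric.inner_add_apply_add_of_mem_orthogonal {T : E →ₗ[ℝ] E}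
    (hT : T.IsSymmetric) {W : Submodule ℝ E} (hW : ∀ w ∈ W, T w ∈ W) {u v : E} (hu : u ∈ W)
    (hv : v ∈ Wᗮ) : ⟪u + v, T (u + v)⟫ = ⟪u, T u⟫ + ⟪v, T v⟫ := by
  have hvTu : ⟪v, T u⟫ = 0 := Submodule.inner_left_of_mem_orthogonal (hW u hu) hv
  have huTv : ⟪u, T v⟫ = 0 := by rw [← hT, real_inner_comm, hvTu]
  simp only [map_add, inner_add_left, inner_add_right, hvTu, huTv]
  ring

lemma LinearMap.IsSymmetric.inner_add_apply_add_le_of_spectral_gap {T : E →ₗ[ℝ] E}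
    (hT : T.IsSymmetric) {W : Submodule ℝ E} (hW : ∀ w ∈ W, T w ∈ W) {μ₀ μ₁ : ℝ}
    (hμ₀ : ∀ w ∈ W, ⟪w, T w⟫ ≤ μ₀ * ‖w‖ ^ 2) (hμ₁ : ∀ w ∈ Wᗮ, ⟪w, T w⟫ ≤ μ₁ * ‖w‖ ^ 2)
    {u v : E} (hu : u ∈ W) (hv : v ∈ Wᗮ) (huv : ‖u + v‖ = 1) :
    ⟪u + v, T (u + v)⟫ ≤ μ₀ - (μ₀ - μ₁) * ‖v‖ ^ 2 := by
  have hpyth : ‖u‖ ^ 2 + ‖v‖ ^ 2 = 1 := by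
    have h := norm_add_sq_real u v
    rw [Submodule.inner_right_of_mem_orthogonal hu hv, huv] at h
    linarith
  rw [hT.inner_add_apply_add_of_mem_orthogonal hW hu hv]
  linear_combination hμ₀ u hu + hμ₁ v hv + μ₀ * hpyth

lemma sub_two_mul_norm_le_inner_apply_self {A Z : E →L[ℝ] E} {u v : E} {a β : ℝ}
    (hu : ‖u‖ = 1) (hAu : A u = a • u) (hv : ‖v‖ = 1) (hβ : (A + Z) v = β • v)
    (hlead : ∀ w, ⟪w, (A + Z) w⟫ ≤ β * ‖w‖ ^ 2) :
    a - 2 * ‖Z‖ ≤ ⟪v, A v⟫ := by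
  have hβv : ⟪v, A v⟫ + ⟪v, Z v⟫ = β := by
    rw [← inner_add_right, ← add_apply,
      inner_apply_self_eq_of_apply_eq_smul hv hβ]
  have hβu : a + ⟪u, Z u⟫ ≤ β := by
    simpa only [add_apply, inner_add_right, hAu,
      real_inner_smul_right, real_inner_self_eq_norm_sq, hu, one_pow, mul_one] using hlead u
  have hZu := (abs_le.mp (abs_inner_apply_self_le Z u)).1
  have hZv := (abs_le.mp (abs_inner_apply_self_le Z v)).2
  rw [hu] at hZu
  rw [hv] at hZv
  linarith

end

theorem stmt7_general {N : ℕ}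
    (X Z : EuclideanSpace ℝ (Fin N) →L[ℝ] EuclideanSpace ℝ (Fin N))
    (hX : IsSelfAdjoint X)
    (lam μ0 μm1 : ℝ) (hlam : 0 < lam) (hgap : μm1 < μ0)
    (W : Submodule ℝ (EuclideanSpace ℝ (Fin N)))
    (hWinv : ∀ w ∈ W, X w ∈ W)
    (hμ0 : ∀ w : EuclideanSpace ℝ (Fin N), ⟪w, X w⟫ ≤ μ0 * ‖w‖ ^ 2)
    (hμm1 : ∀ w ∈ Wᗮ, ⟪w, X w⟫ ≤ μm1 * ‖w‖ ^ 2)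
    (u0 : EuclideanSpace ℝ (Fin N)) (hu0 : ‖u0‖ = 1)
    (hXu0 : X u0 = μ0 • u0)
    (v0 vm vperp : EuclideanSpace ℝ (Fin N)) (hv0 : ‖v0‖ = 1)
    (hvm : vm ∈ W) (hvperp : vperp ∈ Wᗮ) (hdec : v0 = vm + vperp)
    (β : ℝ) (hβ : (lam • X + Z) v0 = β • v0)
    (hlead : ∀ w : EuclideanSpace ℝ (Fin N), ⟪w, (lam • X + Z) w⟫ ≤ β * ‖w‖ ^ 2) :
    ‖vperp‖ ^ 2 ≤ 2 * ‖Z‖ / (lam * (μ0 - μm1)) := by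
  have hX_upper : ⟪v0, X v0⟫ ≤ μ0 - (μ0 - μm1) * ‖vperp‖ ^ 2 := by
    subst hdec
    exact hX.isSymmetric.inner_add_apply_add_le_of_spectral_gap hWinv (fun w _ ↦ hμ0 w) hμm1
      hvm hvperp hv0
  have hX_lower : lam * μ0 - 2 * ‖Z‖ ≤ lam * ⟪v0, X v0⟫ := by
    have hlamXu0 : (lam • X) u0 = (lam * μ0) • u0 := by
      rw [smul_apply, hXu0, smul_smul]
    simpa only [smul_apply, real_inner_smul_right] using
      sub_two_mul_norm_le_inner_apply_self hu0 hlamXu0 hv0 hβ hlead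
  rw [le_div_iff₀ (mul_pos hlam (sub_pos.mpr hgap))]
  nlinarith

/-- Let `M = λX + Z` with `X, Z` symmetric, `X` having top eigenvalue `μ0` attained at the
unit eigenvector `u0`, `W` the span of the top `m+1` eigenspaces of `X` (an invariant
subspace on whose orthogonal complement the Rayleigh quotient of `X` is at most `μ_{m+1}`).
If `v0` is a unit-norm leading eigenvector of `M`, decomposed as `v0 = v^{(m)} + v^⊥` with
`v^{(m)} ∈ W` and `v^⊥ ∈ Wᗮ`, then `‖v^⊥‖² ≤ 2‖Z‖_op/(λ(μ0 - μ_{m+1}))`. -/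
theorem stmt7 {N : ℕ}
    (X Z : EuclideanSpace ℝ (Fin N) →L[ℝ] EuclideanSpace ℝ (Fin N))
    (hX : IsSelfAdjoint X) (hZ : IsSelfAdjoint Z)
    (lam μ0 μm1 : ℝ) (hlam : 0 < lam) (hgap : μm1 < μ0)
    (W : Submodule ℝ (EuclideanSpace ℝ (Fin N)))
    (hWinv : ∀ w ∈ W, X w ∈ W)
    (hμ0 : ∀ w : EuclideanSpace ℝ (Fin N), ⟪w, X w⟫ ≤ μ0 * ‖w‖ ^ 2)
    (hμm1 : ∀ w ∈ Wᗮ, ⟪w, X w⟫ ≤ μm1 * ‖w‖ ^ 2)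
    (u0 : EuclideanSpace ℝ (Fin N)) (hu0 : ‖u0‖ = 1) (hu0W : u0 ∈ W)
    (hXu0 : X u0 = μ0 • u0)
    (v0 vm vperp : EuclideanSpace ℝ (Fin N)) (hv0 : ‖v0‖ = 1)
    (hvm : vm ∈ W) (hvperp : vperp ∈ Wᗮ) (hdec : v0 = vm + vperp)
    (β : ℝ) (hβ : (lam • X + Z) v0 = β • v0)
    (hlead : ∀ w : EuclideanSpace ℝ (Fin N), ⟪w, (lam • X + Z) w⟫ ≤ β * ‖w‖ ^ 2) :
    ‖vperp‖ ^ 2 ≤ 2 * ‖Z‖ / (lam * (μ0 - μm1)) :=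
  stmt7_general X Z hX lam μ0 μm1 hlam hgap W hWinv hμ0 hμm1 u0 hu0 hXu0 v0 vm vperp hv0 hvm hvperp
    hdec β hβ hlead
end

section
/- For any vectors u, e ∈ ℝ^{C(n,ℓ)} and v = u + e, the voting matrices satisfy ‖V(v) − V(u)‖_F² ≤ 3ℓ²‖e‖²(2‖u‖² + ‖e‖²). -/
open Finset

/-- The `n × n` voting matrix of a vector `v` indexed by `ℓ`-subsets of `[n]`:
zero diagonal, and `V_{ij}(v) = Σ_{S : |S|=ℓ, i∈S, j∉S} v_S · v_{S ∆ {i,j}}` off-diagonal. -/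
noncomputable def voting (n ℓ : ℕ) (v : Finset (Fin n) → ℝ) (i j : Fin n) : ℝ :=
  if i = j then 0
  else ∑ S ∈ Finset.univ.filter
      (fun S : Finset (Fin n) => S.card = ℓ ∧ i ∈ S ∧ j ∉ S),
    v S * v (symmDiff S {i, j})

/-- Squared Euclidean norm of a vector indexed by `ℓ`-subsets of `[n]`. -/
noncomputable def sqnorm (n ℓ : ℕ) (v : Finset (Fin n) → ℝ) : ℝ :=
  ∑ S ∈ Finset.univ.filter (fun S : Finset (Fin n) => S.card = ℓ), v S ^ 2

/-- Off-diagonal mixed voting term. -/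
noncomputable def Wmat (n ℓ : ℕ) (a b : Finset (Fin n) → ℝ) (i j : Fin n) : ℝ :=
  if i = j then 0
  else ∑ S ∈ Finset.univ.filter
      (fun S : Finset (Fin n) => S.card = ℓ ∧ i ∈ S ∧ j ∉ S),
    a S * b (symmDiff S {i, j})

lemma symmDiff_pair_eq {n : ℕ} {i j : Fin n} (hij : i ≠ j) {S : Finset (Fin n)}
    (hi : i ∈ S) (hj : j ∉ S) : symmDiff S {i, j} = insert j (S.erase i) := by
  ext a
  simp only [Finset.mem_symmDiff, Finset.mem_insert, Finset.mem_erase]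
  by_cases hai : a = i <;> by_cases haj : a = j <;> simp_all

lemma symmDiff_pair_mem {n ℓ : ℕ} {i j : Fin n} (hij : i ≠ j) {S : Finset (Fin n)}
    (hS : S.card = ℓ) (hi : i ∈ S) (hj : j ∉ S) :
    (symmDiff S {i, j}).card = ℓ ∧ j ∈ symmDiff S {i, j} ∧ i ∉ symmDiff S {i, j} := by
  rw [symmDiff_pair_eq hij hi hj]
  have hje : j ∉ S.erase i := fun h => hj (Finset.mem_of_mem_erase h)
  have hpos : 0 < ℓ := hS ▸ Finset.card_pos.mpr ⟨i, hi⟩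
  refine ⟨?_, ?_, ?_⟩
  · rw [Finset.card_insert_of_notMem hje, Finset.card_erase_of_mem hi, hS]
    omega
  · simp
  · simp only [Finset.mem_insert, Finset.mem_erase]
    rintro (h | ⟨h, _⟩) <;> simp_all

lemma sqnorm_nonneg (n ℓ : ℕ) (v : Finset (Fin n) → ℝ) : 0 ≤ sqnorm n ℓ v :=
  Finset.sum_nonneg fun _ _ => sq_nonneg _

/-- Double counting: summing over `i ∈ S` gives a factor `ℓ`. -/
lemma double_count {n ℓ : ℕ} (f : Finset (Fin n) → ℝ) :
    ∑ i : Fin n, ∑ S ∈ Finset.univ.filter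
        (fun S : Finset (Fin n) => S.card = ℓ ∧ i ∈ S), f S
      = (ℓ : ℝ) * ∑ S ∈ Finset.univ.filter (fun S : Finset (Fin n) => S.card = ℓ), f S := by
  have h1 : ∀ i : Fin n, (Finset.univ.filter
        (fun S : Finset (Fin n) => S.card = ℓ ∧ i ∈ S))
      = (Finset.univ.filter (fun S : Finset (Fin n) => S.card = ℓ)).filter
          (fun S => i ∈ S) := by
    intro i; rw [Finset.filter_filter]
  calc ∑ i : Fin n, ∑ S ∈ Finset.univ.filter
        (fun S : Finset (Fin n) => S.card = ℓ ∧ i ∈ S), f S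
      = ∑ i : Fin n, ∑ S ∈ Finset.univ.filter
          (fun S : Finset (Fin n) => S.card = ℓ), (if i ∈ S then f S else 0) := by
        refine Finset.sum_congr rfl fun i _ => ?_
        rw [h1 i, Finset.sum_filter]
    _ = ∑ S ∈ Finset.univ.filter (fun S : Finset (Fin n) => S.card = ℓ),
          ∑ i : Fin n, (if i ∈ S then f S else 0) := Finset.sum_comm
    _ = ∑ S ∈ Finset.univ.filter (fun S : Finset (Fin n) => S.card = ℓ),
          (S.card : ℝ) * f S := by
        refine Finset.sum_congr rfl fun S _ => ?_
        rw [Finset.sum_ite_mem, Finset.univ_inter, Finset.sum_const, nsmul_eq_mul]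
    _ = (ℓ : ℝ) * ∑ S ∈ Finset.univ.filter (fun S : Finset (Fin n) => S.card = ℓ), f S := by
        rw [Finset.mul_sum]
        refine Finset.sum_congr rfl fun S hS => ?_
        rw [(Finset.mem_filter.mp hS).2]

/-- Double counting with an extra fixed exclusion. -/
lemma double_count' {n ℓ : ℕ} (i : Fin n) (f : Finset (Fin n) → ℝ) :
    ∑ j : Fin n, ∑ T ∈ Finset.univ.filter
        (fun T : Finset (Fin n) => T.card = ℓ ∧ j ∈ T ∧ i ∉ T), f T
      = (ℓ : ℝ) * ∑ T ∈ Finset.univ.filter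
          (fun T : Finset (Fin n) => T.card = ℓ ∧ i ∉ T), f T := by
  have h1 : ∀ j : Fin n, (Finset.univ.filter
        (fun T : Finset (Fin n) => T.card = ℓ ∧ j ∈ T ∧ i ∉ T))
      = (Finset.univ.filter (fun T : Finset (Fin n) => T.card = ℓ ∧ i ∉ T)).filter
          (fun T => j ∈ T) := by
    intro j; rw [Finset.filter_filter]
    apply Finset.filter_congr; intro T _; tauto
  calc ∑ j : Fin n, ∑ T ∈ Finset.univ.filter
        (fun T : Finset (Fin n) => T.card = ℓ ∧ j ∈ T ∧ i ∉ T), f T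
      = ∑ j : Fin n, ∑ T ∈ Finset.univ.filter
          (fun T : Finset (Fin n) => T.card = ℓ ∧ i ∉ T), (if j ∈ T then f T else 0) := by
        refine Finset.sum_congr rfl fun j _ => ?_
        rw [h1 j, Finset.sum_filter]
    _ = ∑ T ∈ Finset.univ.filter (fun T : Finset (Fin n) => T.card = ℓ ∧ i ∉ T),
          ∑ j : Fin n, (if j ∈ T then f T else 0) := Finset.sum_comm
    _ = ∑ T ∈ Finset.univ.filter (fun T : Finset (Fin n) => T.card = ℓ ∧ i ∉ T),
          (T.card : ℝ) * f T := by
        refine Finset.sum_congr rfl fun T _ => ?_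
        rw [Finset.sum_ite_mem, Finset.univ_inter, Finset.sum_const, nsmul_eq_mul]
    _ = (ℓ : ℝ) * ∑ T ∈ Finset.univ.filter
          (fun T : Finset (Fin n) => T.card = ℓ ∧ i ∉ T), f T := by
        rw [Finset.mul_sum]
        refine Finset.sum_congr rfl fun T hT => ?_
        rw [(Finset.mem_filter.mp hT).2.1]

/-- Key bound: the Frobenius norm of the mixed matrix. -/
lemma key (n ℓ : ℕ) (a b : Finset (Fin n) → ℝ) :
    (∑ i : Fin n, ∑ j : Fin n, (Wmat n ℓ a b i j) ^ 2)
      ≤ (ℓ : ℝ) ^ 2 * sqnorm n ℓ a * sqnorm n ℓ b := by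
  set A : Fin n → ℝ := fun i => ∑ S ∈ Finset.univ.filter
      (fun S : Finset (Fin n) => S.card = ℓ ∧ i ∈ S), (a S) ^ 2 with hA
  set B : Fin n → Fin n → ℝ := fun i j => ∑ T ∈ Finset.univ.filter
      (fun T : Finset (Fin n) => T.card = ℓ ∧ j ∈ T ∧ i ∉ T), (b T) ^ 2 with hB
  have hAnn : ∀ i, 0 ≤ A i := fun i => Finset.sum_nonneg fun _ _ => sq_nonneg _
  have hBnn : ∀ i j, 0 ≤ B i j := fun i j => Finset.sum_nonneg fun _ _ => sq_nonneg _
  have step1 : ∀ i j : Fin n, (Wmat n ℓ a b i j) ^ 2 ≤ A i * B i j := by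
    intro i j
    by_cases hij : i = j
    · simp [Wmat, hij]
      exact mul_nonneg (hAnn j) (hBnn j j)
    · rw [Wmat, if_neg hij]
      calc (∑ S ∈ Finset.univ.filter
            (fun S : Finset (Fin n) => S.card = ℓ ∧ i ∈ S ∧ j ∉ S),
            a S * b (symmDiff S {i, j})) ^ 2
          ≤ (∑ S ∈ Finset.univ.filter
              (fun S : Finset (Fin n) => S.card = ℓ ∧ i ∈ S ∧ j ∉ S), (a S) ^ 2)
            * ∑ S ∈ Finset.univ.filter
              (fun S : Finset (Fin n) => S.card = ℓ ∧ i ∈ S ∧ j ∉ S),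
                (b (symmDiff S {i, j})) ^ 2 :=
            Finset.sum_mul_sq_le_sq_mul_sq _ _ _
        _ ≤ A i * B i j := by
            apply mul_le_mul
            · apply Finset.sum_le_sum_of_subset_of_nonneg
              · intro S hS
                simp only [Finset.mem_filter] at hS ⊢
                exact ⟨hS.1, hS.2.1, hS.2.2.1⟩
              · intros; exact sq_nonneg _
            · apply le_of_eq
              refine Finset.sum_nbij' (fun S => symmDiff S {i, j})
                (fun T => symmDiff T {i, j}) ?_ ?_ ?_ ?_ ?_
              · intro S hS
                simp only [Finset.mem_filter] at hS ⊢
                exact ⟨Finset.mem_univ _, symmDiff_pair_mem hij hS.2.1 hS.2.2.1 hS.2.2.2⟩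
              · intro T hT
                simp only [Finset.mem_filter] at hT ⊢
                have := symmDiff_pair_mem (Ne.symm hij) hT.2.1 hT.2.2.1 hT.2.2.2
                rw [Finset.pair_comm j i] at this
                exact ⟨Finset.mem_univ _, this.1, this.2.1, this.2.2⟩
              · intro S _; exact symmDiff_symmDiff_cancel_right {i, j} S
              · intro T _; exact symmDiff_symmDiff_cancel_right {i, j} T
              · intro S _; rfl
            · apply Finset.sum_nonneg; intros; exact sq_nonneg _
            · exact hAnn i
  have step2 : ∀ i : Fin n, ∑ j : Fin n, B i j ≤ (ℓ : ℝ) * sqnorm n ℓ b := by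
    intro i
    rw [double_count' i]
    apply mul_le_mul_of_nonneg_left _ (by positivity)
    apply Finset.sum_le_sum_of_subset_of_nonneg
    · intro T hT
      simp only [Finset.mem_filter] at hT ⊢
      exact ⟨hT.1, hT.2.1⟩
    · intros; exact sq_nonneg _
  have step3 : ∑ i : Fin n, A i = (ℓ : ℝ) * sqnorm n ℓ a := double_count _
  calc ∑ i : Fin n, ∑ j : Fin n, (Wmat n ℓ a b i j) ^ 2
      ≤ ∑ i : Fin n, ∑ j : Fin n, A i * B i j := by
        refine Finset.sum_le_sum fun i _ => Finset.sum_le_sum fun j _ => step1 i j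
    _ = ∑ i : Fin n, A i * ∑ j : Fin n, B i j := by
        refine Finset.sum_congr rfl fun i _ => (Finset.mul_sum _ _ _).symm
    _ ≤ ∑ i : Fin n, A i * ((ℓ : ℝ) * sqnorm n ℓ b) := by
        refine Finset.sum_le_sum fun i _ =>
          mul_le_mul_of_nonneg_left (step2 i) (hAnn i)
    _ = ((ℓ : ℝ) * sqnorm n ℓ a) * ((ℓ : ℝ) * sqnorm n ℓ b) := by
        rw [← Finset.sum_mul, step3]
    _ = (ℓ : ℝ) ^ 2 * sqnorm n ℓ a * sqnorm n ℓ b := by ring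

lemma voting_diff (n ℓ : ℕ) (u e : Finset (Fin n) → ℝ) (i j : Fin n) :
    voting n ℓ (fun S => u S + e S) i j - voting n ℓ u i j
      = Wmat n ℓ u e i j + Wmat n ℓ e u i j + Wmat n ℓ e e i j := by
  by_cases hij : i = j
  · simp [voting, Wmat, hij]
  · simp only [voting, Wmat, if_neg hij]
    rw [← Finset.sum_sub_distrib, ← Finset.sum_add_distrib, ← Finset.sum_add_distrib]
    refine Finset.sum_congr rfl fun S _ => ?_
    ring

/-- For vectors `u, e` indexed by `ℓ`-subsets and `v = u + e`, the voting matrices satisfy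
`‖V(v) - V(u)‖_F² ≤ 3ℓ²‖e‖²(2‖u‖² + ‖e‖²)`. -/
theorem stmt8 (n ℓ : ℕ) (hℓ : 1 ≤ ℓ) (u e : Finset (Fin n) → ℝ) :
    (∑ i : Fin n, ∑ j : Fin n,
        (voting n ℓ (fun S => u S + e S) i j - voting n ℓ u i j) ^ 2)
      ≤ 3 * (ℓ : ℝ) ^ 2 * sqnorm n ℓ e * (2 * sqnorm n ℓ u + sqnorm n ℓ e) := by
  have h1 := key n ℓ u e
  have h2 := key n ℓ e u
  have h3 := key n ℓ e e
  have hstep : ∑ i : Fin n, ∑ j : Fin n,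
        (voting n ℓ (fun S => u S + e S) i j - voting n ℓ u i j) ^ 2
      ≤ ∑ i : Fin n, ∑ j : Fin n,
        (3 * (Wmat n ℓ u e i j) ^ 2 + 3 * (Wmat n ℓ e u i j) ^ 2
          + 3 * (Wmat n ℓ e e i j) ^ 2) := by
    refine Finset.sum_le_sum fun i _ => Finset.sum_le_sum fun j _ => ?_
    rw [voting_diff]
    nlinarith [sq_nonneg (Wmat n ℓ u e i j - Wmat n ℓ e u i j),
      sq_nonneg (Wmat n ℓ e u i j - Wmat n ℓ e e i j),
      sq_nonneg (Wmat n ℓ u e i j - Wmat n ℓ e e i j)]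
  have hsplit : ∑ i : Fin n, ∑ j : Fin n,
        (3 * (Wmat n ℓ u e i j) ^ 2 + 3 * (Wmat n ℓ e u i j) ^ 2
          + 3 * (Wmat n ℓ e e i j) ^ 2)
      = 3 * (∑ i : Fin n, ∑ j : Fin n, (Wmat n ℓ u e i j) ^ 2)
        + 3 * (∑ i : Fin n, ∑ j : Fin n, (Wmat n ℓ e u i j) ^ 2)
        + 3 * (∑ i : Fin n, ∑ j : Fin n, (Wmat n ℓ e e i j) ^ 2) := by
    simp [Finset.sum_add_distrib, Finset.mul_sum]
  nlinarith [hstep, hsplit, h1, h2, h3]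
end

section
/- Let V be a symmetric n×n matrix, α > 0, and suppose ‖V − α·1̂1̂ᵀ‖_op ≤ α for the normalized all-ones vector 1̂ = 1/√n. If x̂ is a unit-norm leading eigenvector of V, then ⟨x̂, 1̂⟩² ≥ 1 − 2‖V − α·1̂1̂ᵀ‖_op/α. -/
open scoped RealInnerProductSpace

/-- Let `V` be a symmetric `n × n` matrix (viewed as a self-adjoint operator), `α > 0`,
`1̂` the normalized all-ones vector, and `R = V - α·1̂1̂ᵀ` with `‖R‖_op ≤ α`. If `x̂` is a
unit-norm leading eigenvector of `V` (maximizing the Rayleigh quotient over unit vectors),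
then `⟨x̂, 1̂⟩² ≥ 1 - 2‖R‖_op/α`. -/
theorem stmt12 (n : ℕ) (hn : 0 < n)
    (V : EuclideanSpace ℝ (Fin n) →L[ℝ] EuclideanSpace ℝ (Fin n))
    (hV : IsSelfAdjoint V) (α : ℝ) (hα : 0 < α)
    (onehat : EuclideanSpace ℝ (Fin n)) (honehat : ∀ i, onehat i = 1 / Real.sqrt n)
    (R : EuclideanSpace ℝ (Fin n) →L[ℝ] EuclideanSpace ℝ (Fin n))
    (hR : R = V - α • ((innerSL ℝ onehat).smulRight onehat))
    (hRle : ‖R‖ ≤ α)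
    (xhat : EuclideanSpace ℝ (Fin n)) (hxhat : ‖xhat‖ = 1)
    (hlead : ∀ y : EuclideanSpace ℝ (Fin n), ‖y‖ = 1 → ⟪y, V y⟫ ≤ ⟪xhat, V xhat⟫) :
    1 - 2 * ‖R‖ / α ≤ ⟪xhat, onehat⟫ ^ 2 := by
  have hone : ‖onehat‖ = 1 := by
    have h1 : ‖onehat‖ ^ 2 = 1 := by
      rw [← real_inner_self_eq_norm_sq, PiLp.inner_apply]
      simp only [honehat, RCLike.inner_apply, starRingEnd_apply, star_trivial]
      rw [Finset.sum_const, Finset.card_univ, Fintype.card_fin]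
      have hnpos : (0:ℝ) < n := Nat.cast_pos.mpr hn
      have hs : Real.sqrt n * Real.sqrt n = n := Real.mul_self_sqrt hnpos.le
      field_simp
      rw [nsmul_eq_mul, Real.sq_sqrt hnpos.le]
      field_simp
    nlinarith [norm_nonneg onehat]
  -- decomposition of quadratic form
  have hdecomp : ∀ y : EuclideanSpace ℝ (Fin n),
      ⟪y, V y⟫ = ⟪y, R y⟫ + α * ⟪y, onehat⟫ ^ 2 := by
    intro y
    have hV' : V = R + α • ((innerSL ℝ onehat).smulRight onehat) := by
      rw [hR]; abel
    rw [hV']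
    simp only [ContinuousLinearMap.add_apply, ContinuousLinearMap.smul_apply,
      ContinuousLinearMap.smulRight_apply, innerSL_apply_apply, inner_add_right,
      inner_smul_right, real_inner_smul_right]
    rw [real_inner_comm onehat y]
    ring
  have hbound : ∀ y : EuclideanSpace ℝ (Fin n), ‖y‖ = 1 → |⟪y, R y⟫| ≤ ‖R‖ := by
    intro y hy
    calc |⟪y, R y⟫| ≤ ‖y‖ * ‖R y‖ := abs_real_inner_le_norm _ _
      _ ≤ ‖y‖ * (‖R‖ * ‖y‖) := by
          exact mul_le_mul_of_nonneg_left (R.le_opNorm y) (norm_nonneg y)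
      _ = ‖R‖ := by rw [hy]; ring
  have h1 := hlead onehat hone
  have h2 := hdecomp onehat
  have h3 := hdecomp xhat
  have h4 := hbound onehat hone
  have h5 := hbound xhat hxhat
  have hself : ⟪onehat, onehat⟫ = 1 := by
    rw [real_inner_self_eq_norm_sq, hone]; norm_num
  rw [h2, h3, hself] at h1
  rw [abs_le] at h4 h5
  have key : α - 2 * ‖R‖ ≤ α * ⟪xhat, onehat⟫ ^ 2 := by nlinarith [h4.1, h5.2]
  have h6 : 2 * ‖R‖ / α * α = 2 * ‖R‖ := div_mul_cancel₀ _ hα.ne'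
  nlinarith [key, h6, hα]
end
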